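/- arXiv:0808.1270 — 7 statements merged into one kernel-verified Lean document; each statement's English description precedes it below -/
import Mathlib

section
/- Let p ≥ 3 be an integer and set λ = 2·cos(π/p). The matrices S = [[1, λ],[0, 1]] and T = [[0, −1],[1, 0]] in SL(2,ℝ) satisfy (S·T)^p = −I, where I is the 2×2 identity matrix. (Equivalently, in PSL(2,ℝ) the Hecke group G_p = ⟨S, T⟩ satisfies the relation (ST)^p = I.) -/
/-!
The matrix `S·T = !![2 cos θ, -1; 1, 0]` with `θ = π / p` is conjugate to the rotation by `θ`:
with `P = !![cos θ, -sin θ; 1, 0]`, of determinant `sin θ ≠ 0`, one has `P · R(θ) = (S·T) · P`.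
Hence `(S·T)^p` is conjugate to `R(θ)^p = R(p θ) = R(π) = -1`, and so equals `-1`.
-/

open Matrix Real

noncomputable section

namespace HeckeGroup

def rotationMatrix (θ : ℝ) : Matrix (Fin 2) (Fin 2) ℝ :=
  !![cos θ, -sin θ; sin θ, cos θ]

theorem rotationMatrix_zero : rotationMatrix 0 = 1 := by
  simp [rotationMatrix, one_fin_two]

theorem rotationMatrix_add (a b : ℝ) :
    rotationMatrix (a + b) = rotationMatrix a * rotationMatrix b := by
  simp only [rotationMatrix, mul_fin_two, cos_add, sin_add]
  ext i j; fin_cases i <;> fin_cases j <;> simp <;> ring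

theorem rotationMatrix_pow (θ : ℝ) (n : ℕ) : rotationMatrix θ ^ n = rotationMatrix (n * θ) := by
  induction n with
  | zero => simp [rotationMatrix_zero]
  | succ n ih => rw [pow_succ, ih, ← rotationMatrix_add, Nat.cast_succ, add_one_mul]

theorem rotationMatrix_pi : rotationMatrix π = -1 := by
  simp [rotationMatrix, one_fin_two]

def heckeMatrix (θ : ℝ) : Matrix (Fin 2) (Fin 2) ℝ :=
  !![2 * cos θ, -1; 1, 0]

def conjugator (θ : ℝ) : Matrix (Fin 2) (Fin 2) ℝ :=
  !![cos θ, -sin θ; 1, 0]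

theorem det_conjugator (θ : ℝ) : (conjugator θ).det = sin θ := by
  simp [conjugator, det_fin_two]

theorem semiconjBy_conjugator (θ : ℝ) :
    SemiconjBy (conjugator θ) (rotationMatrix θ) (heckeMatrix θ) := by
  simp only [SemiconjBy, conjugator, rotationMatrix, heckeMatrix, mul_fin_two]
  ext i j; fin_cases i <;> fin_cases j <;> simp <;> nlinarith [sin_sq_add_cos_sq θ]

theorem heckeMatrix_pow_eq_neg_one {θ : ℝ} {n : ℕ} (hsin : sin θ ≠ 0) (hn : n * θ = π) :
    heckeMatrix θ ^ n = -1 := by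
  have hP : IsUnit (conjugator θ) := by
    rw [isUnit_iff_isUnit_det, det_conjugator]; exact hsin.isUnit
  have hconj := (semiconjBy_conjugator θ).pow_right n
  rw [SemiconjBy, rotationMatrix_pow, hn, rotationMatrix_pi, (Commute.neg_one_right _).eq] at hconj
  exact (hP.mul_left_inj.mp hconj).symm

theorem sin_pi_div_natCast_ne_zero {p : ℕ} (hp : 2 ≤ p) : sin (π / p) ≠ 0 := by
  have hp' : (1 : ℝ) < p := by exact_mod_cast hp
  exact (sin_pos_of_pos_of_lt_pi (by positivity) (div_lt_self pi_pos hp')).ne'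

end HeckeGroup

end

/-- For an integer `p ≥ 3` and `λ = 2·cos(π/p)`, the matrices
`S = [[1, λ],[0, 1]]` and `T = [[0, −1],[1, 0]]` in `SL(2,ℝ)` satisfy
`(S·T)^p = −I`; equivalently, in `PSL(2,ℝ)` the Hecke group relation
`(ST)^p = I` holds. -/
theorem hecke_group_second_relation (p : ℕ) (hp : 3 ≤ p) :
    (!![(1 : ℝ), 2 * Real.cos (Real.pi / p); 0, 1] *
        !![(0 : ℝ), -1; 1, 0]) ^ p =
      -(1 : Matrix (Fin 2) (Fin 2) ℝ) := by
  have hST : !![(1 : ℝ), 2 * Real.cos (Real.pi / p); 0, 1] * !![(0 : ℝ), -1; 1, 0] =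
      HeckeGroup.heckeMatrix (Real.pi / p) := by
    simp [HeckeGroup.heckeMatrix]
  rw [hST]
  refine HeckeGroup.heckeMatrix_pow_eq_neg_one (HeckeGroup.sin_pi_div_natCast_ne_zero (by omega)) ?_
  field_simp
end

section
/- Let p ≥ 3 be an integer, θ = π/p, λ = 2·cos θ, and U = S·T = [[λ, −1],[1, 0]] ∈ SL(2,ℝ). Then: (i) for every integer m with 1 ≤ m ≤ p, U^m = (sin(mθ)/sin θ)·U − (sin((m−1)θ)/sin θ)·I; (ii) the (2,2) entry of U is 0, so the Möbius action of U sends 0 to ∞; (iii) for 2 ≤ m ≤ p the Möbius image U^m·0 equals sin(mθ)/sin((m−1)θ); in particular U^p·0 = 0 and the chain 0 = U^p·0 < U^{p−1}·0 < ⋯ < U^2·0 of strict inequalities holds, so the intervals I_j = [U^{p−j+2}·0, U^{p−j+1}·0) for 1 ≤ j ≤ p (reading U^{p+1}·0 as −∞ and U·0 as ∞) partition [−∞, ∞). -/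
/-!
`U` has trace `2 cos θ` and determinant `1`, so by Cayley–Hamilton `U² = 2 cos θ · U − 1`; the
recurrence `sin((n+1)θ) = 2 cos θ sin(nθ) − sin((n−1)θ)` then gives the formula for `U^n` by
induction. Reading off the second column, `U^m·0 = sin(mθ)/sin((m−1)θ)`, which vanishes at
`m = p` since `pθ = π`. The chain is strictly decreasing because
`sin(a+θ) sin(a−θ) = sin² a − sin² θ < sin² a`. Once the breakpoints are sorted, the intervals
are consecutive half-open pieces between `−∞` and `∞`, hence a partition.
-/

open Real Set

theorem sin_add_mul_sin_sub (a b : ℝ) : sin (a + b) * sin (a - b) = sin a ^ 2 - sin b ^ 2 := by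
  rw [sin_add, sin_sub]
  nlinarith [sin_sq_add_cos_sq a, sin_sq_add_cos_sq b]

theorem sin_add_add_sin_sub (a b : ℝ) : sin (a + b) + sin (a - b) = 2 * cos b * sin a := by
  rw [sin_add, sin_sub]; ring

theorem sin_add_div_sin_lt_sin_div_sin_sub {a b : ℝ} (hb : sin b ≠ 0) (ha : 0 < sin a)
    (hab : 0 < sin (a - b)) : sin (a + b) / sin a < sin a / sin (a - b) := by
  rw [div_lt_div_iff₀ ha hab, sin_add_mul_sin_sub]
  nlinarith [sq_pos_of_ne_zero hb]

theorem sin_mul_pi_div_pos {x y : ℝ} (hx : 0 < x) (hxy : x < y) : 0 < sin (x * (π / y)) := by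
  have hy : 0 < y := hx.trans hxy
  refine sin_pos_of_pos_of_lt_pi (by positivity) ?_
  rw [← mul_div_assoc, div_lt_iff₀ hy]
  exact mul_lt_mul_of_pos_right hxy pi_pos |>.trans_eq (mul_comm _ _)

theorem pow_eq_sin_div_smul_sub {A : Type*} [Ring A] [Algebra ℝ A] {u : A} {θ : ℝ}
    (hu : u * u = (2 * cos θ) • u - 1) (hθ : sin θ ≠ 0) (n : ℕ) :
    u ^ n = (sin (n * θ) / sin θ) • u - (sin ((n - 1) * θ) / sin θ) • (1 : A) := by
  induction n with
  | zero => simp [neg_mul, hθ]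
  | succ n ih =>
    have hrec : sin ((n + 1) * θ) = 2 * cos θ * sin (n * θ) - sin ((n - 1) * θ) := by
      rw [add_mul, sub_mul, one_mul, ← sin_add_add_sin_sub]; ring
    rw [pow_succ, ih, sub_mul, smul_mul_assoc, smul_mul_assoc, one_mul, hu]
    push_cast
    rw [add_sub_cancel_right, hrec]
    module

theorem companion_fin_two_mul_self {R : Type*} [CommRing R] (t : R) :
    !![t, -1; 1, 0] * !![t, -1; 1, 0] = t • !![t, -1; 1, 0] - (1 : Matrix (Fin 2) (Fin 2) R) := by
  ext i j; fin_cases i <;> fin_cases j <;> simp [sub_eq_add_neg]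

theorem existsUnique_mem_Ico_of_monotone {α : Type*} [LinearOrder α] {G : ℕ → α}
    (hG : Monotone G) {n : ℕ} {x : α} (h0 : G 0 ≤ x) (hn : x < G n) :
    ∃! j, j ∈ Finset.Icc 1 n ∧ x ∈ Ico (G (j - 1)) (G j) := by
  classical
  have hex : ∃ j, x < G j := ⟨n, hn⟩
  have hpos : Nat.find hex ≠ 0 := fun h => (h ▸ Nat.find_spec hex).not_ge h0
  have le_of_mem {j k : ℕ} (hj : x ∈ Ico (G (j - 1)) (G j)) (hk : x < G k) : j ≤ k :=
    not_lt.1 fun hkj => (hk.trans_le (hG (by omega : k ≤ j - 1))).not_ge hj.1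
  refine ⟨Nat.find hex, ⟨?_, ?_⟩, fun k ⟨_, hxk⟩ => ?_⟩
  · exact Finset.mem_Icc.2 ⟨Nat.one_le_iff_ne_zero.2 hpos, Nat.find_min' hex hn⟩
  · exact ⟨not_lt.1 (Nat.find_min hex (by omega)), Nat.find_spec hex⟩
  · exact (le_of_mem hxk (Nat.find_spec hex)).antisymm (Nat.find_min' hex hxk.2)

theorem existsUnique_mem_Iio_Ico_Ici {f : ℕ → ℝ} {p : ℕ} (hp : 2 ≤ p)
    (hf : ∀ m, 2 ≤ m → m < p → f (m + 1) ≤ f m) (x : ℝ) :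
    ∃! j, j ∈ Finset.Icc 1 p ∧ x ∈ (if j = 1 then Iio (f p) else if j = p then Ici (f 2)
      else Ico (f (p - j + 2)) (f (p - j + 1))) := by
  -- the breakpoints in increasing order, `G 0 = -∞` and `G p = +∞`
  let G : ℕ → EReal := fun k => if k = 0 then ⊥ else if p ≤ k then ⊤ else f (p - k + 1)
  have hG : Monotone G := monotone_nat_of_le_succ fun k => by
    simp only [G]
    split_ifs <;> try first | exact bot_le | exact le_top | contradiction | omega
    rw [show p - (k + 1) + 1 = p - k by omega]
    exact EReal.coe_le_coe_iff.2 (hf (p - k) (by omega) (by omega))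
  have hmem : ∀ j ∈ Finset.Icc 1 p, x ∈ (if j = 1 then Iio (f p) else if j = p then Ici (f 2)
      else Ico (f (p - j + 2)) (f (p - j + 1))) ↔ (x : EReal) ∈ Ico (G (j - 1)) (G j) := by
    intro j hj
    rw [Finset.mem_Icc] at hj
    have hidx : p - (j - 1) + 1 = p - j + 2 := by omega
    simp only [G, hidx]
    split_ifs <;> first | omega | simp_all
  refine (existsUnique_congr fun j => and_congr_right (hmem j)).2 ?_
  exact existsUnique_mem_Ico_of_monotone hG (by simp [G]) (by simp [G, show p ≠ 0 by omega])

/-- For an integer `p ≥ 3`, `θ = π/p`, `λ = 2cos θ`, `U = ST = [[λ,−1],[1,0]]`: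
(i) for `1 ≤ m ≤ p`, `U^m = (sin(mθ)/sin θ)·U − (sin((m−1)θ)/sin θ)·I`;
(ii) the `(2,2)` entry of `U` is `0` (so `U·0 = ∞` under the Möbius action);
(iii) for `2 ≤ m ≤ p` the Möbius image `U^m·0` equals `sin(mθ)/sin((m−1)θ)`;
in particular `U^p·0 = 0`, the chain `0 = U^p·0 < U^{p−1}·0 < ⋯ < U^2·0`
holds, and the corresponding intervals
`I_1 = [−∞, U^p·0)`, `I_j = [U^{p−j+2}·0, U^{p−j+1}·0)` for `1 < j < p`,
`I_p = [U^2·0, ∞)` partition the (extended) real line. -/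
theorem hecke_U_powers_and_interval_partition
    (p : ℕ) (hp : 3 ≤ p)
    (θ : ℝ) (hθ : θ = Real.pi / p)
    (lam : ℝ) (hlam : lam = 2 * Real.cos θ)
    (U : Matrix (Fin 2) (Fin 2) ℝ) (hU : U = !![lam, -1; 1, 0])
    (f : ℕ → ℝ) (hf : ∀ m : ℕ, f m = (U ^ m) 0 1 / (U ^ m) 1 1)
    (Iv : ℕ → Set ℝ)
    (hIv : ∀ j : ℕ, Iv j =
      if j = 1 then Set.Iio (f p)
      else if j = p then Set.Ici (f 2)
      else Set.Ico (f (p - j + 2)) (f (p - j + 1))) :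
    (∀ m : ℕ, 1 ≤ m → m ≤ p →
      U ^ m = (Real.sin (m * θ) / Real.sin θ) • U
        - (Real.sin (((m : ℝ) - 1) * θ) / Real.sin θ) •
            (1 : Matrix (Fin 2) (Fin 2) ℝ)) ∧
    U 1 1 = 0 ∧
    (∀ m : ℕ, 2 ≤ m → m ≤ p →
      f m = Real.sin (m * θ) / Real.sin (((m : ℝ) - 1) * θ)) ∧
    f p = 0 ∧
    (∀ m : ℕ, 2 ≤ m → m < p → f (m + 1) < f m) ∧
    (∀ x : ℝ, ∃! j : ℕ, j ∈ Finset.Icc 1 p ∧ x ∈ Iv j) := by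
  have hp1 : (1 : ℝ) < p := by exact_mod_cast (by omega : 1 < p)
  have hsin : 0 < Real.sin θ := by simpa [hθ] using sin_mul_pi_div_pos one_pos hp1
  have hU2 : U * U = (2 * cos θ) • U - 1 := by rw [hU, hlam]; exact companion_fin_two_mul_self _
  have hpow := pow_eq_sin_div_smul_sub hU2 hsin.ne'
  have hf' : ∀ m : ℕ, f m = Real.sin (m * θ) / Real.sin ((m - 1) * θ) := fun m => by
    rw [hf, hpow m, hU]
    simp [div_div_div_cancel_right₀ hsin.ne']
  have hfp : f p = 0 := by
    rw [hf', hθ, mul_div_cancel₀ π (by positivity), sin_pi, zero_div]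
  have hanti : ∀ m : ℕ, 2 ≤ m → m < p → f (m + 1) < f m := by
    intro m hm hmp
    have hm' : (1 : ℝ) < m := by exact_mod_cast hm
    have hmp' : (m : ℝ) < p := by exact_mod_cast hmp
    rw [hf', hf', Nat.cast_succ, add_sub_cancel_right, add_one_mul, sub_one_mul]
    refine sin_add_div_sin_lt_sin_div_sin_sub hsin.ne' ?_ ?_
    · exact hθ ▸ sin_mul_pi_div_pos (by positivity) hmp'
    · rw [← sub_one_mul, hθ]
      exact sin_mul_pi_div_pos (by linarith) (by linarith)
  refine ⟨fun m _ _ => hpow m, by simp [hU], fun m _ _ => hf' m, hfp, hanti, fun x => ?_⟩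
  simpa only [hIv] using
    existsUnique_mem_Iio_Ico_Ici (by omega) (fun m hm hmp => (hanti m hm hmp).le) x
end

section
/- Let k be a positive integer and let α, α′ be distinct complex numbers. Then for every z ∈ ℂ with z ≠ α and z ≠ α′: (α − α′)^k / ((z − α)^k (z − α′)^k) = Σ_{m=1}^{k} (−1)^{m−k} · C(2k−m−1, k−1) · (α − α′)^{m−k} · (z − α)^{−m} + Σ_{n=1}^{k} (−1)^{k} · C(2k−n−1, k−1) · (α − α′)^{n−k} · (z − α′)^{−n}, where C(·,·) denotes the binomial coefficient and all powers are integer powers. -/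
/-!
Put `x = (z - α) / (α' - α)` and `y = (z - α') / (α - α')`, so that `x + y = 1`. After clearing
denominators the decomposition becomes `x ^ k P(y) + y ^ k P(x) = 1`, where `P` is the sum of
the first `k` terms of the power series of `(1 - t)⁻ᵏ`. This is the negative-binomial fact that
in independent trials with success probability `x`, either `k` successes come before `k`
failures or the other way round. Proved for `a` successes against `b` failures, it follows by
induction on `b`: by Pascal's rule, `1 - x` times the degree `< n` partial sum of
`(1 - x)^{-(b+2)}` is the same partial sum of `(1 - x)^{-(b+1)}` minus a single multiple of `xⁿ`.
-/

open Finset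

/-- The sum of the first `n` terms of the power series of `(1 - x)^{-(a+1)}`. -/
def invOneSubPowPartialSum {R : Type*} [CommRing R] (a n : ℕ) (x : R) : R :=
  ∑ j ∈ range n, ((j + a).choose a : R) * x ^ j

theorem one_sub_mul_invOneSubPowPartialSum_succ {R : Type*} [CommRing R] (x : R) (b n : ℕ) :
    (1 - x) * invOneSubPowPartialSum (b + 1) n x =
      invOneSubPowPartialSum b n x - ((n + b).choose (b + 1) : R) * x ^ n := by
  induction n with
  | zero => simp [invOneSubPowPartialSum]
  | succ n ih =>
    simp only [invOneSubPowPartialSum] at ih ⊢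
    rw [sum_range_succ, sum_range_succ, mul_add, ih, add_right_comm n 1 b, ← add_assoc,
      Nat.choose_succ_succ']
    push_cast
    ring

theorem pow_mul_invOneSubPowPartialSum_add_eq_one {R : Type*} [CommRing R] {x y : R}
    (hxy : x + y = 1) (a b : ℕ) :
    x ^ (a + 1) * invOneSubPowPartialSum a (b + 1) y +
      y ^ (b + 1) * invOneSubPowPartialSum b (a + 1) x = 1 := by
  obtain rfl : y = 1 - x := eq_sub_of_add_eq' hxy
  induction b with
  | zero =>
    simpa [invOneSubPowPartialSum, add_comm] using
      congrArg (x ^ (a + 1) + ·) (mul_neg_geom_sum x (a + 1))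
  | succ b ih =>
    have htelescope := one_sub_mul_invOneSubPowPartialSum_succ x b (a + 1)
    rw [add_right_comm a 1 b] at htelescope
    rw [invOneSubPowPartialSum, sum_range_succ, show b + 1 + a = a + (b + 1) by omega,
      Nat.choose_symm_add, ← invOneSubPowPartialSum]
    linear_combination ih + (1 - x) ^ (b + 1) * htelescope

theorem sum_Icc_one_eq_sum_range_sub {M : Type*} [AddCommMonoid M] (f : ℕ → M) (k : ℕ) :
    ∑ m ∈ Icc 1 k, f m = ∑ j ∈ range k, f (k - j) := by
  rw [range_eq_Ico, sum_Ico_reflect f 0 (Nat.le_succ k), Nat.add_sub_cancel_left, Nat.sub_zero]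
  rfl

theorem zpow_tsub_sub_mul_zpow_neg_tsub {K : Type*} [Field K] {d u : K} (hd : d ≠ 0)
    (hu : u ≠ 0) {j k : ℕ} (hjk : j ≤ k) :
    d ^ (((k - j : ℕ) : ℤ) - k) * u ^ (-((k - j : ℕ) : ℤ)) = (u / d) ^ j / u ^ k := by
  obtain ⟨m, rfl⟩ := Nat.exists_eq_add_of_le hjk
  simp only [Nat.add_sub_cancel_left, Nat.cast_add, sub_add_cancel_right, zpow_neg, zpow_natCast,
    div_pow, pow_add]
  field_simp

theorem sum_Icc_choose_mul_zpow_mul_zpow_neg {K : Type*} [Field K] {d u : K} (hd : d ≠ 0)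
    (hu : u ≠ 0) (k : ℕ) :
    ∑ m ∈ Icc 1 k,
        ((2 * k - m - 1).choose (k - 1) : K) * (d ^ ((m : ℤ) - k) * u ^ (-(m : ℤ))) =
      invOneSubPowPartialSum (k - 1) k (u / d) / u ^ k := by
  rw [sum_Icc_one_eq_sum_range_sub, invOneSubPowPartialSum, sum_div]
  refine sum_congr rfl fun j hj ↦ ?_
  have hjk : j < k := mem_range.mp hj
  rw [show 2 * k - (k - j) - 1 = j + (k - 1) by omega,
    zpow_tsub_sub_mul_zpow_neg_tsub hd hu hjk.le, mul_div_assoc]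

theorem sub_pow_div_pow_mul_pow_eq_invOneSubPowPartialSum {K : Type*} [Field K] {α α' z : K}
    (hαα' : α ≠ α') (hzα : z ≠ α) (hzα' : z ≠ α') (c : ℕ) :
    (α - α') ^ (c + 1) / ((z - α) ^ (c + 1) * (z - α') ^ (c + 1)) =
      invOneSubPowPartialSum c (c + 1) ((z - α) / (α' - α)) / (z - α) ^ (c + 1) +
        (-1) ^ (c + 1) * invOneSubPowPartialSum c (c + 1) ((z - α') / (α - α')) /
          (z - α') ^ (c + 1) := by
  have hd : α - α' ≠ 0 := sub_ne_zero.mpr hαα'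
  have hd' : α' - α ≠ 0 := sub_ne_zero.mpr hαα'.symm
  have hx : z - α = (z - α) / (α' - α) * -(α - α') := by rw [neg_sub, div_mul_cancel₀ _ hd']
  have hy : z - α' = (z - α') / (α - α') * (α - α') := (div_mul_cancel₀ _ hd).symm
  have key := pow_mul_invOneSubPowPartialSum_add_eq_one
    (x := (z - α) / (α' - α)) (y := (z - α') / (α - α')) (by field_simp; ring) c c
  have hsign : (-1 : K) ^ (c + 1) * (-1) ^ (c + 1) = 1 := by rw [← mul_pow]; norm_num
  have hu : z - α ≠ 0 := sub_ne_zero.mpr hzα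
  have hv : z - α' ≠ 0 := sub_ne_zero.mpr hzα'
  generalize (z - α) / (α' - α) = x at key hx ⊢
  generalize (z - α') / (α - α') = y at key hy ⊢
  field_simp
  rw [hx, hy, mul_pow, mul_pow, neg_pow]
  linear_combination -(α - α') ^ (c + 1) * key -
    x ^ (c + 1) * invOneSubPowPartialSum c (c + 1) y * (α - α') ^ (c + 1) * hsign

/-- Partial fraction decomposition of `(α − α′)^k/((z−α)^k (z−α′)^k)`:
for a positive integer `k` and distinct `α, α′ ∈ ℂ`, and `z ≠ α, α′`,
`(α − α′)^k / ((z − α)^k (z − α′)^k)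
  = Σ_{m=1}^{k} (−1)^{m−k}·C(2k−m−1, k−1)·(α − α′)^{m−k}·(z − α)^{−m}
  + Σ_{n=1}^{k} (−1)^{k}·C(2k−n−1, k−1)·(α − α′)^{n−k}·(z − α′)^{−n}`. -/
theorem partial_fraction_decomposition (k : ℕ) (hk : 0 < k)
    (α α' z : ℂ) (hαα' : α ≠ α') (hzα : z ≠ α) (hzα' : z ≠ α') :
    (α - α') ^ k / ((z - α) ^ k * (z - α') ^ k) =
      (∑ m ∈ Finset.Icc 1 k,
        (-1 : ℂ) ^ ((m : ℤ) - (k : ℤ)) *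
          (Nat.choose (2 * k - m - 1) (k - 1) : ℂ) *
          (α - α') ^ ((m : ℤ) - (k : ℤ)) * (z - α) ^ (-(m : ℤ))) +
      (∑ n ∈ Finset.Icc 1 k,
        (-1 : ℂ) ^ (k : ℤ) *
          (Nat.choose (2 * k - n - 1) (k - 1) : ℂ) *
          (α - α') ^ ((n : ℤ) - (k : ℤ)) * (z - α') ^ (-(n : ℤ))) := by
  obtain ⟨c, rfl⟩ : ∃ c, k = c + 1 := ⟨k - 1, by omega⟩
  have hd : α - α' ≠ 0 := sub_ne_zero.mpr hαα'
  have hd' : α' - α ≠ 0 := sub_ne_zero.mpr hαα'.symm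
  have hu : z - α ≠ 0 := sub_ne_zero.mpr hzα
  have hv : z - α' ≠ 0 := sub_ne_zero.mpr hzα'
  rw [sub_pow_div_pow_mul_pow_eq_invOneSubPowPartialSum hαα' hzα hzα' c]
  congr 1
  · refine (sum_Icc_choose_mul_zpow_mul_zpow_neg hd' hu _).symm.trans
      (sum_congr rfl fun m _ ↦ ?_)
    rw [show α' - α = -1 * (α - α') by ring, mul_zpow]
    ring
  · simp only [mul_assoc, ← mul_sum, zpow_natCast, mul_div_assoc]
    exact congrArg _ (sum_Icc_choose_mul_zpow_mul_zpow_neg hd hv _).symm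
end

section
/- Let λ > 0 and β > 0 be real numbers and let (a_n)_{n≥1} be complex numbers with |a_n| ≤ C·n^β for all n and some constant C > 0. Then for every s ∈ ℂ with Re(s) > β + 1: the series F(iy) = Σ_{n=1}^∞ a_n e^{−2πny/λ} converges absolutely for every y > 0, the integral ∫₀^∞ F(iy) y^{s−1} dy converges absolutely, the Dirichlet series φ(s) = Σ_{n=1}^∞ a_n n^{−s} converges absolutely, and ∫₀^∞ F(iy) y^{s−1} dy = (2π/λ)^{−s} · Γ(s) · φ(s). -/
open MeasureTheory Set Real Complex

/-! Each term `a n e^{-p n y}` (with `p n = 2π(n+1)/λ`) has Mellin transform `Γ(s) a n (p n)^{-s}`,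
and for `σ = Re s` the integrals of the absolute values of the terms add up to
`Γ(σ) ∑ |a n| (p n)^{-σ}`, which is finite when `σ > β + 1`. So the series can be integrated term by
term: this gives at once the absolute convergence of the Mellin integral and its value. -/

section TsumIntegrable

variable {α E ι : Type*} [MeasurableSpace α] {μ : Measure α} [NormedAddCommGroup E]
  [CompleteSpace E] [Countable ι]

theorem integrable_tsum_of_summable_integral_norm {F : ι → α → E}
    (hF_int : ∀ i, Integrable (F i) μ) (hF_sum : Summable fun i ↦ ∫ a, ‖F i a‖ ∂μ) :
    Integrable (fun a ↦ ∑' i, F i a) μ := by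
  refine ⟨AEStronglyMeasurable.tsum fun i ↦ (hF_int i).1, ?_⟩
  calc ∫⁻ a, ‖∑' i, F i a‖ₑ ∂μ ≤ ∫⁻ a, ∑' i, ‖F i a‖ₑ ∂μ :=
        lintegral_mono fun _ ↦ enorm_tsum_le_tsum_enorm
    _ = ∑' i, ∫⁻ a, ‖F i a‖ₑ ∂μ := lintegral_tsum fun i ↦ (hF_int i).1.enorm
    _ = ∑' i, ENNReal.ofReal (∫ a, ‖F i a‖ ∂μ) := by
        simp_rw [ofReal_integral_norm_eq_lintegral_enorm (hF_int _)]
    _ = ENNReal.ofReal (∑' i, ∫ a, ‖F i a‖ ∂μ) :=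
        (ENNReal.ofReal_tsum_of_nonneg (fun _ ↦ integral_nonneg fun _ ↦ norm_nonneg _) hF_sum).symm
    _ < ⊤ := ENNReal.ofReal_lt_top

end TsumIntegrable

section MellinExp

variable {s : ℂ} {p : ℝ}

lemma norm_cpow_mul_exp_neg_mul {t : ℝ} (ht : 0 < t) :
    ‖(t : ℂ) ^ (s - 1) * rexp (-p * t)‖ = t ^ (s.re - 1) * rexp (-(p * t)) := by
  rw [norm_mul, norm_cpow_eq_rpow_re_of_pos ht, sub_re, one_re, norm_real,
    Real.norm_of_nonneg (exp_pos _).le, neg_mul]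

lemma integrableOn_cpow_mul_exp_neg_mul (hs : 0 < s.re) (hp : 0 < p) :
    IntegrableOn (fun t : ℝ ↦ (t : ℂ) ^ (s - 1) * rexp (-p * t)) (Ioi 0) := by
  refine (integrable_norm_iff (by fun_prop)).mp ?_
  refine (integrableOn_rpow_mul_exp_neg_mul_rpow (s := s.re - 1) (by linarith) one_pos
    hp).congr_fun (fun t ht ↦ ?_) measurableSet_Ioi
  rw [norm_cpow_mul_exp_neg_mul ht]
  simp only [rpow_one, neg_mul]

lemma integral_norm_cpow_mul_exp_neg_mul (hs : 0 < s.re) (hp : 0 < p) :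
    ∫ t : ℝ in Ioi 0, ‖(t : ℂ) ^ (s - 1) * rexp (-p * t)‖ = Real.Gamma s.re / p ^ s.re := by
  rw [setIntegral_congr_fun measurableSet_Ioi fun t ht ↦ norm_cpow_mul_exp_neg_mul ht,
    Real.integral_rpow_mul_exp_neg_mul_Ioi hs hp, one_div, inv_rpow hp.le, div_eq_inv_mul]

end MellinExp

/-- `hasSum_mellin` does not record that the Mellin integral converges, without which
`mellin F s` would be a junk value. -/
lemma mellinConvergent_of_hasSum {ι : Type*} [Countable ι] {a : ι → ℂ} {p : ι → ℝ} {F : ℝ → ℂ}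
    {s : ℂ} (hp : ∀ i, 0 < p i) (hs : 0 < s.re)
    (hF : ∀ t ∈ Ioi 0, HasSum (fun i ↦ a i * rexp (-p i * t)) (F t))
    (h_sum : Summable fun i ↦ ‖a i‖ / p i ^ s.re) :
    MellinConvergent F s := by
  have h_int (i : ι) : IntegrableOn (fun t : ℝ ↦ a i * ((t : ℂ) ^ (s - 1) * rexp (-p i * t)))
      (Ioi 0) := (integrableOn_cpow_mul_exp_neg_mul hs (hp i)).const_mul (a i)
  have h_norm (i : ι) : ∫ t : ℝ in Ioi 0, ‖a i * ((t : ℂ) ^ (s - 1) * rexp (-p i * t))‖ =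
      Real.Gamma s.re * (‖a i‖ / p i ^ s.re) := by
    simp_rw [norm_mul (a i)]
    rw [integral_const_mul, integral_norm_cpow_mul_exp_neg_mul hs (hp i)]
    ring
  have h_tsum : IntegrableOn
      (fun t : ℝ ↦ ∑' i, a i * ((t : ℂ) ^ (s - 1) * rexp (-p i * t))) (Ioi 0) :=
    integrable_tsum_of_summable_integral_norm h_int
      ((h_sum.mul_left _).congr fun i ↦ (h_norm i).symm)
  refine h_tsum.congr_fun (fun t ht ↦ ?_) measurableSet_Ioi
  rw [smul_eq_mul, ← (hF t ht).tsum_eq, ← tsum_mul_left]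
  exact tsum_congr fun i ↦ mul_left_comm _ _ _

lemma summable_norm_mul_exp_neg_mul_of_norm_le_rpow {a : ℕ → ℂ} {C β c : ℝ}
    (ha : ∀ n : ℕ, 1 ≤ n → ‖a n‖ ≤ C * (n : ℝ) ^ β) (hc : 0 < c) :
    Summable fun n : ℕ ↦ ‖a (n + 1)‖ * rexp (-c * ((n : ℝ) + 1)) := by
  have hC : 0 ≤ C := by simpa using (norm_nonneg _).trans (ha 1 le_rfl)
  set k := ⌈β⌉₊
  have hmaj : Summable fun n : ℕ ↦ C * (((n + 1 : ℕ) : ℝ) ^ k * rexp (-c * (n + 1 : ℕ))) :=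
    ((summable_nat_add_iff 1).mpr (summable_pow_mul_exp_neg_nat_mul k hc)).mul_left C
  refine Summable.of_nonneg_of_le (fun n ↦ by positivity) (fun n ↦ ?_) hmaj
  have hn : (1 : ℝ) ≤ (n : ℝ) + 1 := by simp
  have hpow : ((n : ℝ) + 1) ^ β ≤ ((n : ℝ) + 1) ^ k := by
    rw [← rpow_natCast]
    exact rpow_le_rpow_of_exponent_le hn (Nat.le_ceil β)
  calc ‖a (n + 1)‖ * rexp (-c * ((n : ℝ) + 1))
      ≤ C * ((n : ℝ) + 1) ^ β * rexp (-c * ((n : ℝ) + 1)) := by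
        gcongr
        exact_mod_cast ha (n + 1) le_add_self
    _ ≤ C * (((n + 1 : ℕ) : ℝ) ^ k * rexp (-c * (n + 1 : ℕ))) := by
        push_cast
        rw [← mul_assoc]
        gcongr

lemma summable_norm_div_rpow_of_norm_le_rpow {a : ℕ → ℂ} {C β σ : ℝ}
    (ha : ∀ n : ℕ, 1 ≤ n → ‖a n‖ ≤ C * (n : ℝ) ^ β) (hσ : β + 1 < σ) :
    Summable fun n : ℕ ↦ ‖a (n + 1)‖ / ((n : ℝ) + 1) ^ σ := by
  have hL : LSeriesSummable a σ := LSeriesSummable_of_le_const_mul_rpow (x := β + 1)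
    (by simpa using hσ) ⟨C, fun n hn ↦ by simpa using ha n (Nat.one_le_iff_ne_zero.mpr hn)⟩
  refine ((summable_nat_add_iff 1).mpr hL.norm).congr fun n ↦ ?_
  rw [LSeries.norm_term_eq]
  simp

lemma norm_mul_natCast_add_one_cpow_neg (z s : ℂ) (n : ℕ) :
    ‖z * ((n : ℂ) + 1) ^ (-s)‖ = ‖z‖ / ((n : ℝ) + 1) ^ s.re := by
  rw [norm_mul, show (n : ℂ) + 1 = ((n + 1 : ℝ) : ℂ) by push_cast; rfl,
    norm_cpow_eq_rpow_re_of_pos (by positivity), neg_re, rpow_neg (by positivity), div_eq_mul_inv]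

lemma mellinConvergent_and_hasSum_mellin_mul_natCast_add_one {a : ℕ → ℂ} {c : ℝ} {F : ℝ → ℂ}
    {s : ℂ} (hc : 0 < c) (hs : 0 < s.re)
    (hF : ∀ t ∈ Ioi 0, HasSum (fun n ↦ a n * rexp (-(c * ((n : ℝ) + 1)) * t)) (F t))
    (h_sum : Summable fun n ↦ ‖a n‖ / ((n : ℝ) + 1) ^ s.re) :
    MellinConvergent F s ∧
      HasSum (fun n ↦ (c : ℂ) ^ (-s) * Gamma s * (a n * ((n : ℂ) + 1) ^ (-s))) (mellin F s) := by
  have hp (n : ℕ) : 0 < c * ((n : ℝ) + 1) := by positivity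
  have h_sum' : Summable fun n ↦ ‖a n‖ / (c * ((n : ℝ) + 1)) ^ s.re := by
    refine (h_sum.mul_left (c ^ (-s.re))).congr fun n ↦ ?_
    rw [mul_rpow hc.le (by positivity), rpow_neg hc.le]
    field_simp
  refine ⟨mellinConvergent_of_hasSum hp hs hF h_sum', ?_⟩
  convert hasSum_mellin (fun n ↦ Or.inr (hp n)) hs hF h_sum' using 2 with n
  have hcs : (c : ℂ) ^ s ≠ 0 := by simp [cpow_eq_zero_iff, hc.ne']
  rw [ofReal_mul, mul_cpow_ofReal_nonneg hc.le (by positivity), cpow_neg, cpow_neg]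
  push_cast
  field_simp

theorem mellin_transform_dirichlet_series_general
    (lam β C : ℝ) (hlam : 0 < lam) (hβ : 0 < β)
    (a : ℕ → ℂ) (ha : ∀ n : ℕ, 1 ≤ n → ‖a n‖ ≤ C * (n : ℝ) ^ β)
    (F : ℝ → ℂ)
    (hF : ∀ y : ℝ, F y = ∑' n : ℕ, a (n + 1) *
      Complex.exp (-((2 * Real.pi * ((n : ℝ) + 1) * y / lam : ℝ) : ℂ)))
    (s : ℂ) (hs : β + 1 < s.re) :
    (∀ y : ℝ, 0 < y → Summable (fun n : ℕ =>
      ‖a (n + 1) * Complex.exp (-((2 * Real.pi * ((n : ℝ) + 1) * y / lam : ℝ) : ℂ))‖)) ∧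
    IntegrableOn (fun y : ℝ => F y * (y : ℂ) ^ (s - 1)) (Set.Ioi 0) ∧
    Summable (fun n : ℕ => ‖a (n + 1) * ((n : ℂ) + 1) ^ (-s)‖) ∧
    ∫ y in Set.Ioi (0 : ℝ), F y * (y : ℂ) ^ (s - 1) =
      ((2 * Real.pi / lam : ℝ) : ℂ) ^ (-s) * Complex.Gamma s *
        ∑' n : ℕ, a (n + 1) * ((n : ℂ) + 1) ^ (-s) := by
  set c := 2 * π / lam
  have hc : 0 < c := by positivity
  have hexp (n : ℕ) (y : ℝ) : cexp (-((2 * π * ((n : ℝ) + 1) * y / lam : ℝ) : ℂ)) =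
      rexp (-(c * ((n : ℝ) + 1)) * y) := by
    rw [← ofReal_neg, ← ofReal_exp]
    congr 2
    simp only [c]
    ring
  have hdecay (y : ℝ) (hy : 0 < y) : Summable fun n : ℕ ↦
      ‖a (n + 1) * cexp (-((2 * π * ((n : ℝ) + 1) * y / lam : ℝ) : ℂ))‖ := by
    refine (summable_norm_mul_exp_neg_mul_of_norm_le_rpow ha (mul_pos hc hy)).congr fun n ↦ ?_
    rw [norm_mul, hexp, norm_real, norm_of_nonneg (exp_pos _).le]
    ring_nf
  have hdirichlet := summable_norm_div_rpow_of_norm_le_rpow ha hs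
  have hF' (t : ℝ) (ht : t ∈ Ioi 0) :
      HasSum (fun n ↦ a (n + 1) * rexp (-(c * ((n : ℝ) + 1)) * t)) (F t) := by
    simpa only [hF, hexp] using (hdecay t ht).of_norm.hasSum
  obtain ⟨hconv, hmellin⟩ :=
    mellinConvergent_and_hasSum_mellin_mul_natCast_add_one hc (by linarith) hF' hdirichlet
  refine ⟨hdecay, ?_, hdirichlet.congr fun n ↦ (norm_mul_natCast_add_one_cpow_neg _ s n).symm, ?_⟩
  · simpa only [MellinConvergent, smul_eq_mul, mul_comm] using hconv
  · rw [← tsum_mul_left, hmellin.tsum_eq, mellin]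
    simp only [smul_eq_mul, mul_comm]

/-- Hecke's correspondence (Mellin transform step): if `|a_n| ≤ C n^β` and
`Re s > β + 1`, then `F(iy) = Σ_{n≥1} a_n e^{−2πny/λ}` converges absolutely
for all `y > 0`, the Mellin transform `∫₀^∞ F(iy) y^{s−1} dy` converges
absolutely, the Dirichlet series `φ(s) = Σ_{n≥1} a_n n^{−s}` converges
absolutely, and `∫₀^∞ F(iy) y^{s−1} dy = (2π/λ)^{−s} Γ(s) φ(s)`. -/
theorem mellin_transform_dirichlet_series
    (lam β C : ℝ) (hlam : 0 < lam) (hβ : 0 < β) (hC : 0 < C)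
    (a : ℕ → ℂ) (ha : ∀ n : ℕ, 1 ≤ n → ‖a n‖ ≤ C * (n : ℝ) ^ β)
    (F : ℝ → ℂ)
    (hF : ∀ y : ℝ, F y = ∑' n : ℕ, a (n + 1) *
      Complex.exp (-((2 * Real.pi * ((n : ℝ) + 1) * y / lam : ℝ) : ℂ)))
    (s : ℂ) (hs : β + 1 < s.re) :
    (∀ y : ℝ, 0 < y → Summable (fun n : ℕ =>
      ‖a (n + 1) * Complex.exp (-((2 * Real.pi * ((n : ℝ) + 1) * y / lam : ℝ) : ℂ))‖)) ∧
    IntegrableOn (fun y : ℝ => F y * (y : ℂ) ^ (s - 1)) (Set.Ioi 0) ∧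
    Summable (fun n : ℕ => ‖a (n + 1) * ((n : ℂ) + 1) ^ (-s)‖) ∧
    ∫ y in Set.Ioi (0 : ℝ), F y * (y : ℂ) ^ (s - 1) =
      ((2 * Real.pi / lam : ℝ) : ℂ) ^ (-s) * Complex.Gamma s *
        ∑' n : ℕ, a (n + 1) * ((n : ℂ) + 1) ^ (-s) :=
  mellin_transform_dirichlet_series_general lam β C hlam hβ a ha F hF s hs
end

section
/- Let k be an odd positive integer, N a positive integer, c_1, …, c_N complex constants, and for each j let α_j, β_j be real numbers with α_j > 0 > β_j. Define q*(z) = Σ_{j=1}^N c_j (α_j − β_j)^k (z − α_j)^{−k} (z − β_j)^{−k}, and assume that z^{−2k} q*(−1/z) + q*(z) = 0 for all z in the upper half-plane. Then the integral R(s) = −∫₀^∞ q*(iy) y^{s−1} dy converges absolutely for every s ∈ ℂ with 0 < Re(s) < 2k, and the first relation R(2k − s) = R(s) holds for all such s. -/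
/-!
On the imaginary axis, `F y = q*(iy)` is continuous on `[0, ∞)` (all poles of `q*` are real and
nonzero) and `O(y^{-2k})` at infinity, so its Mellin transform converges on `0 < Re s < 2k`, and
`R = -mellin F`. As `k` is odd, `(iy)^{-2k} = -y^{-2k}`, so the period relation at `z = iy` reads
`F y = y^{-2k} F (1/y)`; substituting `y ↦ 1/y` in the Mellin integral gives
`mellin F s = mellin F (2k - s)`.
-/

open MeasureTheory Asymptotics Filter Complex

theorem Complex.abs_le_norm_I_mul_ofReal_sub_ofReal (y a : ℝ) : |y| ≤ ‖I * y - a‖ := by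
  simpa using abs_im_le_norm (I * y - a)

theorem Complex.I_mul_ofReal_sub_ofReal_ne_zero (y : ℝ) {a : ℝ} (ha : a ≠ 0) :
    I * y - a ≠ 0 := fun h => ha (by simpa using (congrArg re h).symm)

theorem continuous_I_mul_ofReal_sub_ofReal_zpow {a : ℝ} (ha : a ≠ 0) (n : ℤ) :
    Continuous fun y : ℝ => (I * y - a) ^ n :=
  (by fun_prop : Continuous fun y : ℝ => I * y - a).zpow₀ n
    fun y => Or.inl (I_mul_ofReal_sub_ofReal_ne_zero y ha)

theorem isBigO_atTop_I_mul_ofReal_sub_ofReal_zpow_neg (a : ℝ) (n : ℕ) :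
    (fun y : ℝ => (I * y - a) ^ (-(n : ℤ))) =O[atTop] fun y => y ^ (-(n : ℝ)) := by
  refine IsBigO.of_bound 1 ?_
  filter_upwards [eventually_gt_atTop 0] with y hy
  have hle : y ≤ ‖I * y - a‖ :=
    (le_abs_self y).trans (abs_le_norm_I_mul_ofReal_sub_ofReal y a)
  rw [one_mul, norm_zpow, Real.norm_of_nonneg (by positivity), zpow_neg, zpow_natCast,
    Real.rpow_neg hy.le, Real.rpow_natCast]
  exact inv_anti₀ (pow_pos hy n) (pow_le_pow_left₀ hy.le hle n)

section PartialFractionSum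

variable {ι : Type*} [Fintype ι] (c : ι → ℂ) {a b : ι → ℝ} (m n : ℕ)

theorem continuous_sum_I_mul_ofReal_sub_zpow_mul (ha : ∀ j, a j ≠ 0) (hb : ∀ j, b j ≠ 0) :
    Continuous fun y : ℝ =>
      ∑ j, c j * (I * y - a j) ^ (-(m : ℤ)) * (I * y - b j) ^ (-(n : ℤ)) :=
  continuous_finsetSum _ fun j _ => (continuous_const.mul
    (continuous_I_mul_ofReal_sub_ofReal_zpow (ha j) _)).mul
    (continuous_I_mul_ofReal_sub_ofReal_zpow (hb j) _)

theorem isBigO_atTop_sum_I_mul_ofReal_sub_zpow_mul :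
    (fun y : ℝ => ∑ j, c j * (I * y - a j) ^ (-(m : ℤ)) * (I * y - b j) ^ (-(n : ℤ)))
      =O[atTop] fun y => y ^ (-((m + n : ℕ) : ℝ)) := by
  refine IsBigO.fun_sum fun j _ => ?_
  refine (((isBigO_const_const (c j) one_ne_zero atTop).mul
    (isBigO_atTop_I_mul_ofReal_sub_ofReal_zpow_neg (a j) m)).mul
    (isBigO_atTop_I_mul_ofReal_sub_ofReal_zpow_neg (b j) n)).congr' .rfl ?_
  filter_upwards [eventually_gt_atTop 0] with y hy
  rw [one_mul, ← Real.rpow_add hy]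
  push_cast
  ring_nf

end PartialFractionSum

section Mellin

variable {E : Type*} [NormedAddCommGroup E] [NormedSpace ℂ E]

theorem mellinConvergent_of_continuous_of_isBigO_atTop {f : ℝ → E} {a : ℝ} {s : ℂ}
    (hf : Continuous f) (hf_top : f =O[atTop] (· ^ (-a))) (hs_bot : 0 < s.re)
    (hs_top : s.re < a) : MellinConvergent f s := by
  have hf_bot : f =O[nhdsWithin 0 (Set.Ioi 0)] (· ^ (-(0 : ℝ))) := by
    simpa only [neg_zero, Real.rpow_zero] using
      ((hf.tendsto 0).isBigO_one ℝ).mono nhdsWithin_le_nhds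
  exact mellinConvergent_of_isBigO_rpow (hf.locallyIntegrable.locallyIntegrableOn _) hf_top
    hs_top hf_bot hs_bot

theorem mellin_eq_mellin_sub_of_eq_cpow_neg_smul_comp_inv {f : ℝ → E} {a : ℂ}
    (hf : ∀ t > 0, f t = (t : ℂ) ^ (-a) • f t⁻¹) (s : ℂ) :
    mellin f s = mellin f (a - s) :=
  calc mellin f s = mellin (fun t => (t : ℂ) ^ (-a) • f t⁻¹) s :=
        setIntegral_congr_fun measurableSet_Ioi fun t ht => by rw [hf t ht]
    _ = mellin f (a - s) := by
      rw [mellin_cpow_smul, mellin_comp_inv, neg_add, neg_neg, neg_add_eq_sub]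

end Mellin

theorem Complex.neg_one_div_I_mul (z : ℂ) : -1 / (I * z) = I * z⁻¹ := by
  rw [div_eq_mul_inv, mul_inv, inv_I]
  ring

theorem Complex.I_mul_zpow_neg_two_mul_of_odd {k : ℕ} (hk : Odd k) (z : ℂ) :
    (I * z) ^ (-(2 * (k : ℤ))) = -z ^ (-(2 * (k : ℤ))) := by
  rw [mul_zpow, zpow_neg, zpow_mul, zpow_two, I_mul_I, zpow_natCast, hk.neg_one_pow]
  norm_num

theorem apply_I_mul_eq_cpow_smul_apply_I_mul_inv {k : ℕ} (hk : Odd k) {q : ℂ → ℂ}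
    (hq : ∀ z : ℂ, 0 < z.im → z ^ (-(2 * (k : ℤ))) * q (-1 / z) + q z = 0)
    {y : ℝ} (hy : 0 < y) :
    q (I * y) = (y : ℂ) ^ (-(2 * (k : ℂ))) • q (I * (y⁻¹ : ℝ)) := by
  have h := hq (I * y) (by simpa using hy)
  rw [neg_one_div_I_mul, I_mul_zpow_neg_two_mul_of_odd hk] at h
  have hexp : -(2 * (k : ℂ)) = ((-(2 * (k : ℤ)) : ℤ) : ℂ) := by push_cast; ring
  rw [hexp, cpow_intCast, smul_eq_mul, ofReal_inv]
  linear_combination h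

theorem remainder_first_relation_general (k : ℕ) (hk : Odd k)
    (N : ℕ) (c : Fin N → ℂ) (α β : Fin N → ℝ)
    (hαβ : ∀ j, β j < 0 ∧ 0 < α j)
    (q : ℂ → ℂ)
    (hq : ∀ z : ℂ, q z = ∑ j, c j * ((α j : ℂ) - (β j : ℂ)) ^ k *
      (z - (α j : ℂ)) ^ (-(k : ℤ)) * (z - (β j : ℂ)) ^ (-(k : ℤ)))
    (hrel : ∀ z : ℂ, 0 < z.im →
      z ^ (-(2 * (k : ℤ))) * q (-1 / z) + q z = 0)
    (R : ℂ → ℂ)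
    (hR : ∀ s : ℂ, R s =
      -∫ y in Set.Ioi (0 : ℝ), q (Complex.I * (y : ℂ)) * (y : ℂ) ^ (s - 1)) :
    ∀ s : ℂ, 0 < s.re → s.re < 2 * k →
      IntegrableOn (fun y : ℝ =>
        q (Complex.I * (y : ℂ)) * (y : ℂ) ^ (s - 1)) (Set.Ioi 0) ∧
      R (2 * (k : ℂ) - s) = R s := by
  intro s hs_bot hs_top
  set F : ℝ → ℂ := fun y => q (I * y)
  have hF_eq : F = fun y : ℝ => ∑ j, c j * ((α j : ℂ) - β j) ^ k *
      (I * y - α j) ^ (-(k : ℤ)) * (I * y - β j) ^ (-(k : ℤ)) :=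
    funext fun y => hq _
  have hF_cont : Continuous F := hF_eq ▸ continuous_sum_I_mul_ofReal_sub_zpow_mul _ k k
    (fun j => (hαβ j).2.ne') fun j => (hαβ j).1.ne
  have hF_top : F =O[atTop] (· ^ (-(2 * k : ℝ))) := by
    rw [hF_eq, two_mul]
    exact_mod_cast isBigO_atTop_sum_I_mul_ofReal_sub_zpow_mul _ k k
  have hF_conv : MellinConvergent F s :=
    mellinConvergent_of_continuous_of_isBigO_atTop hF_cont hF_top hs_bot
      (by exact_mod_cast hs_top)
  have hR_mellin : ∀ w, R w = -mellin F w := fun w => by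
    simp_rw [hR, mellin, smul_eq_mul, mul_comm]; rfl
  refine ⟨hF_conv.congr_fun (fun y _ => mul_comm _ _) measurableSet_Ioi, ?_⟩
  rw [hR_mellin, hR_mellin, mellin_eq_mellin_sub_of_eq_cpow_neg_smul_comp_inv
    (fun y hy => apply_I_mul_eq_cpow_smul_apply_I_mul_inv hk hrel hy), sub_sub_cancel]

/-- First relation for the remainder term: let `k` be an odd positive
integer and `q*(z) = Σ_j c_j (α_j − β_j)^k (z−α_j)^{−k}(z−β_j)^{−k}` with
`α_j > 0 > β_j`, satisfying the period relation
`z^{−2k} q*(−1/z) + q*(z) = 0` on the upper half-plane. Then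
`R(s) = −∫₀^∞ q*(iy) y^{s−1} dy` converges absolutely for `0 < Re s < 2k`
and satisfies `R(2k − s) = R(s)`. -/
theorem remainder_first_relation (k : ℕ) (hk : Odd k) (hkpos : 0 < k)
    (N : ℕ) (hN : 0 < N) (c : Fin N → ℂ) (α β : Fin N → ℝ)
    (hαβ : ∀ j, β j < 0 ∧ 0 < α j)
    (q : ℂ → ℂ)
    (hq : ∀ z : ℂ, q z = ∑ j, c j * ((α j : ℂ) - (β j : ℂ)) ^ k *
      (z - (α j : ℂ)) ^ (-(k : ℤ)) * (z - (β j : ℂ)) ^ (-(k : ℤ)))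
    (hrel : ∀ z : ℂ, 0 < z.im →
      z ^ (-(2 * (k : ℤ))) * q (-1 / z) + q z = 0)
    (R : ℂ → ℂ)
    (hR : ∀ s : ℂ, R s =
      -∫ y in Set.Ioi (0 : ℝ), q (Complex.I * (y : ℂ)) * (y : ℂ) ^ (s - 1)) :
    ∀ s : ℂ, 0 < s.re → s.re < 2 * k →
      IntegrableOn (fun y : ℝ =>
        q (Complex.I * (y : ℂ)) * (y : ℂ) ^ (s - 1)) (Set.Ioi 0) ∧
      R (2 * (k : ℂ) - s) = R s :=
  remainder_first_relation_general k hk N c α β hαβ q hq hrel R hR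
end

section
/- Let p ≥ 3 be an integer, λ = 2·cos(π/p), k an odd positive integer, and let u(x) = 1/(λ − x) denote the Möbius action of U^{−1} where U = ST = [[λ, −1],[1, 0]] (so u has order p as a Möbius transformation). Let L be a positive integer, c_1, …, c_L complex constants, and for each ℓ and each j with 2 ≤ j ≤ p let P_{ℓ,j} be a finite set of pairs (a, b) of distinct real numbers such that for every integer r the iterate pairs (u^r(a), u^r(b)) are defined (no division by zero is encountered) and consist of distinct nonzero reals. For 0 ≤ m ≤ p − 1 define R_m(s) = −Σ_{ℓ=1}^{L} c_ℓ Σ_{j=2}^{p} Σ_{(a,b) ∈ P_{ℓ,j}} [ R(s; u^m(a), u^m(b)) − R(s; u^{m−(j−1)}(a), u^{m−(j−1)}(b)) ], so that R_0 = R is the remainder term and R_m = ρ^m(R) under the identification ρ(R(s;a,b)) = −R(2k−s; a−λ, b−λ) = R(s; u(a), u(b)). Then for every s with 0 < Re(s) < 2k, the second relation holds: R_0(s) + R_1(s) + ⋯ + R_{p−1}(s) = 0. -/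
open MeasureTheory

/-- `R(s; a, b) = (a−b)^k ∫₀^∞ y^{s−1}(iy−a)^{−k}(iy−b)^{−k} dy`. -/
noncomputable def Rterm (k : ℕ) (s : ℂ) (a b : ℝ) : ℂ :=
  ((a : ℂ) - (b : ℂ)) ^ k * ∫ y in Set.Ioi (0 : ℝ),
    (y : ℂ) ^ (s - 1) * (Complex.I * (y : ℂ) - (a : ℂ)) ^ (-(k : ℤ)) *
      (Complex.I * (y : ℂ) - (b : ℂ)) ^ (-(k : ℤ))

/-- Integer iterates of the Möbius map `u(x) = 1/(λ − x)` (the action of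
`U⁻¹`, where `U = ST = [[λ,−1],[1,0]]`); negative iterates use the inverse
map `x ↦ λ − 1/x`. -/
noncomputable def uIter (lam : ℝ) (r : ℤ) (x : ℝ) : ℝ :=
  if 0 ≤ r then (fun t => 1 / (lam - t))^[r.toNat] x
  else (fun t => lam - 1 / t)^[(-r).toNat] x

/-!
With `λ = 2 cos θ`, `θ = π/p`, the iterates of `u(x) = 1/(λ − x)` are
`uⁿ(x) = d(n−1)/d(n)` with `d(t) = sin(tθ)·x − sin((t+1)θ)`, because `d` satisfies the
Chebyshev recurrence `d(t+1) = λ·d(t) − d(t−1)` (the entries of `Uⁿ` are multiples of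
`sin(nθ)`). Since `pθ = π`, `d(p−1)/d(p) = x`, so `u` has order `p` along every orbit avoiding
the pole `λ`. Hence `m ↦ R(s; uᵐa, uᵐb)` is `p`-periodic, and the sum over a full period of each
difference `F(m) − F(m − (j−1))` vanishes.
-/

open Real Function Finset

theorem Function.Periodic.sum_range_add {M : Type*} [AddCommGroup M] {F : ℤ → M} {p : ℕ}
    (hF : Periodic F p) (t : ℤ) :
    ∑ m ∈ range p, F (m + t) = ∑ m ∈ range p, F m := by
  set G : ℤ → M := fun t => ∑ m ∈ range p, F (m + t)
  have hG : Periodic G 1 := fun t => by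
    have h := (sum_range_succ' (fun m : ℕ => F (m + t)) p).symm.trans
      (sum_range_succ (fun m : ℕ => F (m + t)) p)
    rw [Nat.cast_zero, zero_add, add_comm (p : ℤ), hF t, add_left_inj] at h
    simpa only [G, Nat.cast_succ, add_assoc, add_comm (1 : ℤ)] using h
  simpa [G] using hG.int_mul t 0

theorem Function.Periodic.sum_range_sub_sub_eq_zero {M : Type*} [AddCommGroup M] {F : ℤ → M}
    {p : ℕ} (hF : Periodic F p) (t : ℤ) :
    ∑ m ∈ range p, (F m - F (m - t)) = 0 := by
  simp_rw [sum_sub_distrib, sub_eq_add_neg (_ : ℤ), hF.sum_range_add, sub_self]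

noncomputable def uMap (lam t : ℝ) : ℝ := 1 / (lam - t)

noncomputable def uDenom (θ x t : ℝ) : ℝ := sin (t * θ) * x - sin ((t + 1) * θ)

theorem uDenom_add_one (θ x t : ℝ) :
    uDenom θ x (t + 1) = 2 * cos θ * uDenom θ x t - uDenom θ x (t - 1) := by
  have h : ∀ u, sin (u + θ) + sin (u - θ) = 2 * cos θ * sin u := fun u => by
    rw [sin_add, sin_sub]; ring
  have h₁ := h (t * θ)
  have h₂ := h ((t + 1) * θ)
  simp only [uDenom]
  ring_nf at h₁ h₂ ⊢
  linear_combination x * h₁ - h₂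

theorem iterate_uMap_eq_div {θ x : ℝ} (hθ : sin θ ≠ 0)
    (hx : ∀ n : ℕ, (uMap (2 * cos θ))^[n] x ≠ 2 * cos θ) (n : ℕ) :
    uDenom θ x n ≠ 0 ∧ (uMap (2 * cos θ))^[n] x = uDenom θ x (n - 1) / uDenom θ x n := by
  induction n with
  | zero =>
    have h0 : uDenom θ x 0 = -sin θ := by simp [uDenom]
    have h1 : uDenom θ x (-1) = -sin θ * x := by simp [uDenom]
    simp only [Nat.cast_zero, zero_sub, iterate_zero_apply, h0, h1]
    exact ⟨neg_ne_zero.mpr hθ, by field_simp⟩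
  | succ n ih =>
    obtain ⟨hd, hy⟩ := ih
    have hstep : uDenom θ x (n + 1) = uDenom θ x n * (2 * cos θ - (uMap (2 * cos θ))^[n] x) := by
      rw [uDenom_add_one, hy]
      field_simp
    have hsub : 2 * cos θ - (uMap (2 * cos θ))^[n] x ≠ 0 := sub_ne_zero.mpr (hx n).symm
    rw [Nat.cast_succ, add_sub_cancel_right, iterate_succ_apply', hstep]
    exact ⟨mul_ne_zero hd hsub, by rw [uMap]; field_simp⟩

theorem iterate_uMap_period {p : ℕ} {θ x : ℝ} (hpθ : p * θ = π) (hθ : sin θ ≠ 0)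
    (hx : ∀ n : ℕ, (uMap (2 * cos θ))^[n] x ≠ 2 * cos θ) :
    (uMap (2 * cos θ))^[p] x = x := by
  have hnum : uDenom θ x (p - 1) = sin θ * x := by
    simp [uDenom, sub_mul, hpθ, sin_pi_sub]
  have hden : uDenom θ x p = sin θ := by
    simp [uDenom, add_mul, hpθ, sin_add]
  rw [(iterate_uMap_eq_div hθ hx p).2, hnum, hden, mul_div_cancel_left₀ x hθ]

theorem uIter_natCast (lam x : ℝ) (n : ℕ) : uIter lam n x = (uMap lam)^[n] x := by
  rw [uIter, if_pos (Int.natCast_nonneg n), Int.toNat_natCast]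
  rfl

theorem uIter_neg_natCast (lam x : ℝ) (n : ℕ) :
    uIter lam (-n) x = (fun t => lam - 1 / t)^[n] x := by
  rcases n.eq_zero_or_pos with rfl | hn
  · simp [uIter]
  · simp [uIter, hn.ne']

-- With `1 / 0 = 0`, `uMap lam (lam - 1 / y) = y` holds for every `y`, including `y = 0`.
theorem uIter_add_one (lam x : ℝ) (r : ℤ) :
    uIter lam (r + 1) x = uMap lam (uIter lam r x) := by
  obtain ⟨n, rfl | rfl⟩ := r.eq_nat_or_neg
  · rw [← Nat.cast_succ, uIter_natCast, uIter_natCast, iterate_succ_apply']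
  · rcases n with _ | m
    · simp [uIter, uMap]
    · rw [show -((m + 1 : ℕ) : ℤ) + 1 = -m by push_cast; ring, uIter_neg_natCast,
        uIter_neg_natCast, iterate_succ_apply', uMap, sub_sub_cancel, one_div_one_div]

theorem uIter_add_natCast (lam x : ℝ) (r : ℤ) (n : ℕ) :
    uIter lam (r + n) x = (uMap lam)^[n] (uIter lam r x) := by
  induction n with
  | zero => simp
  | succ n ih => rw [Nat.cast_succ, ← add_assoc, uIter_add_one, ih, iterate_succ_apply']

theorem uIter_periodic {p : ℕ} {θ x : ℝ} (hpθ : p * θ = π) (hθ : sin θ ≠ 0)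
    (hx : ∀ r : ℤ, uIter (2 * cos θ) r x ≠ 2 * cos θ) :
    Periodic (fun r => uIter (2 * cos θ) r x) p := fun r => by
  refine (uIter_add_natCast _ x r p).trans (iterate_uMap_period hpθ hθ fun n => ?_)
  rw [← uIter_add_natCast]
  exact hx _

theorem remainder_second_relation_general (p : ℕ) (hp : 3 ≤ p)
    (lam : ℝ) (hlam : lam = 2 * Real.cos (Real.pi / p))
    (k : ℕ)
    (L : ℕ) (c : Fin L → ℂ)
    (P : Fin L → ℕ → Finset (ℝ × ℝ))
    (hP : ∀ ℓ : Fin L, ∀ j ∈ Finset.Icc 2 p, ∀ q ∈ P ℓ j, ∀ r : ℤ,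
      uIter lam r q.1 ≠ uIter lam r q.2 ∧
      uIter lam r q.1 ≠ 0 ∧ uIter lam r q.2 ≠ 0 ∧
      uIter lam r q.1 ≠ lam ∧ uIter lam r q.2 ≠ lam)
    (Rm : ℕ → ℂ → ℂ)
    (hRm : ∀ (m : ℕ) (s : ℂ), Rm m s =
      -∑ ℓ : Fin L, c ℓ * ∑ j ∈ Finset.Icc 2 p, ∑ q ∈ P ℓ j,
        (Rterm k s (uIter lam (m : ℤ) q.1) (uIter lam (m : ℤ) q.2) -
          Rterm k s (uIter lam ((m : ℤ) - ((j : ℤ) - 1)) q.1)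
            (uIter lam ((m : ℤ) - ((j : ℤ) - 1)) q.2))) :
    ∀ s : ℂ, 0 < s.re → s.re < 2 * k →
      ∑ m ∈ Finset.range p, Rm m s = 0 := by
  intro s _ _
  subst hlam
  have hpθ : (p : ℝ) * (π / p) = π := mul_div_cancel₀ π (by positivity)
  have hθ : sin (π / p) ≠ 0 :=
    (sin_pos_of_pos_of_lt_pi (by positivity) (div_lt_self pi_pos (by norm_cast; omega))).ne'
  have hperiodic : ∀ ℓ, ∀ j ∈ Icc 2 p, ∀ q ∈ P ℓ j,
      Periodic (fun r : ℤ => Rterm k s (uIter (2 * cos (π / p)) r q.1)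
        (uIter (2 * cos (π / p)) r q.2)) p := fun ℓ j hj q hq r => by
    have hq := hP ℓ j hj q hq
    simp only [uIter_periodic hpθ hθ (fun r => (hq r).2.2.2.1) r,
      uIter_periodic hpθ hθ (fun r => (hq r).2.2.2.2) r]
  simp_rw [hRm, sum_neg_distrib, neg_eq_zero, mul_sum]
  rw [sum_comm]
  refine sum_eq_zero fun ℓ _ => ?_
  rw [sum_comm]
  refine sum_eq_zero fun j hj => ?_
  rw [sum_comm]
  refine sum_eq_zero fun q hq => ?_
  rw [← mul_sum, (hperiodic ℓ j hj q hq).sum_range_sub_sub_eq_zero, mul_zero]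

/-- The second relation for the remainder term: with `λ = 2cos(π/p)`,
`u = U⁻¹` acting as `x ↦ 1/(λ−x)`, and
`R_m(s) = −Σ_ℓ c_ℓ Σ_{j=2}^p Σ_{(a,b)∈P_{ℓ,j}}
  [R(s; uᵐa, uᵐb) − R(s; u^{m−(j−1)}a, u^{m−(j−1)}b)]`
(so `R_0 = R` and `R_m = ρᵐ(R)`), provided all the integer iterates of the
pairs are distinct nonzero reals different from `λ` (so all iterates are
defined), we have `R_0(s) + R_1(s) + ⋯ + R_{p−1}(s) = 0` for `0 < Re s < 2k`. -/
theorem remainder_second_relation (p : ℕ) (hp : 3 ≤ p)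
    (lam : ℝ) (hlam : lam = 2 * Real.cos (Real.pi / p))
    (k : ℕ) (hk : Odd k) (hkpos : 0 < k)
    (L : ℕ) (hL : 0 < L) (c : Fin L → ℂ)
    (P : Fin L → ℕ → Finset (ℝ × ℝ))
    (hP : ∀ ℓ : Fin L, ∀ j ∈ Finset.Icc 2 p, ∀ q ∈ P ℓ j, ∀ r : ℤ,
      uIter lam r q.1 ≠ uIter lam r q.2 ∧
      uIter lam r q.1 ≠ 0 ∧ uIter lam r q.2 ≠ 0 ∧
      uIter lam r q.1 ≠ lam ∧ uIter lam r q.2 ≠ lam)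
    (Rm : ℕ → ℂ → ℂ)
    (hRm : ∀ (m : ℕ) (s : ℂ), Rm m s =
      -∑ ℓ : Fin L, c ℓ * ∑ j ∈ Finset.Icc 2 p, ∑ q ∈ P ℓ j,
        (Rterm k s (uIter lam (m : ℤ) q.1) (uIter lam (m : ℤ) q.2) -
          Rterm k s (uIter lam ((m : ℤ) - ((j : ℤ) - 1)) q.1)
            (uIter lam ((m : ℤ) - ((j : ℤ) - 1)) q.2))) :
    ∀ s : ℂ, 0 < s.re → s.re < 2 * k →
      ∑ m ∈ Finset.range p, Rm m s = 0 :=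
  remainder_second_relation_general p hp lam hlam k L c P hP Rm hRm
end

section
/- Let m be a positive integer and α a real number. (i) For every s ∈ ℂ with Re(s) < m, both integrals below converge absolutely and ∫₁^∞ y^{s−1} (iy − α)^{−m} dy = i^{−m} ∫₀^1 u^{m−s−1} (1 + iαu)^{−m} du. (ii) The function s ↦ ∫₁^∞ y^{s−1}(iy − α)^{−m} dy, holomorphic on the half-plane Re(s) < m, extends to a meromorphic function on all of ℂ whose poles are at most simple and are contained in the set {m, m+1, m+2, …}. -/
/-!
Substituting `y = 1/u` turns `∫₁^∞ y^{s-1} (iy - α)^{-m} dy` into `i^{-m}` times the truncated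
Mellin transform `M ψ (m - s) = ∫₀¹ u^{m-s-1} ψ(u) du` of the smooth function
`ψ(u) = (1 + iαu)^{-m}`. For any `f` smooth on `[0, 1]`, integration by parts gives
`z · M f z = f 1 - M f' (z + 1)` for `Re z > 0`; iterating this continues `M f` to `Re z > -K`
with only simple poles at `0, -1, …, -(K - 1)`, and the continuations agree on overlaps.
-/

open MeasureTheory Set Filter Topology
open scoped ContDiff Pointwise

def AtMostSimplePoleAt (f : ℂ → ℂ) (z₀ : ℂ) : Prop :=
  ∃ h : ℂ → ℂ, AnalyticAt ℂ h z₀ ∧ ∀ᶠ z in 𝓝[≠] z₀, f z = h z / (z - z₀)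

namespace AtMostSimplePoleAt

variable {f g : ℂ → ℂ} {z₀ : ℂ}

theorem congr (hf : AtMostSimplePoleAt f z₀) (hfg : f =ᶠ[𝓝[≠] z₀] g) :
    AtMostSimplePoleAt g z₀ := by
  obtain ⟨h, hh, hfh⟩ := hf
  exact ⟨h, hh, hfg.symm.trans hfh⟩

theorem const_mul (hf : AtMostSimplePoleAt f z₀) (c : ℂ) :
    AtMostSimplePoleAt (fun z => c * f z) z₀ := by
  obtain ⟨h, hh, hfh⟩ := hf
  exact ⟨fun z => c * h z, analyticAt_const.mul hh,
    hfh.mono fun z hz => by simp only [hz, mul_div_assoc]⟩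

theorem const_sub (hf : AtMostSimplePoleAt f z₀) (c : ℂ) :
    AtMostSimplePoleAt (fun z => c - f z) z₀ := by
  obtain ⟨h, hh, hfh⟩ := hf
  refine ⟨fun z => c * (z - z₀) - h z, by fun_prop, ?_⟩
  filter_upwards [hfh, self_mem_nhdsWithin] with z hz hne
  rw [hz, sub_div, mul_div_cancel_right₀ _ (sub_ne_zero.mpr hne)]

theorem div (hf : AtMostSimplePoleAt f z₀) {φ : ℂ → ℂ} (hφ : AnalyticAt ℂ φ z₀)
    (hφ₀ : φ z₀ ≠ 0) : AtMostSimplePoleAt (fun z => f z / φ z) z₀ := by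
  obtain ⟨h, hh, hfh⟩ := hf
  exact ⟨fun z => h z / φ z, hh.div hφ hφ₀,
    hfh.mono fun z hz => by simp only [hz, div_right_comm]⟩

theorem comp_add_const {c : ℂ} (hf : AtMostSimplePoleAt f (z₀ + c)) :
    AtMostSimplePoleAt (fun z => f (z + c)) z₀ := by
  obtain ⟨h, hh, hfh⟩ := hf
  have hmap : Tendsto (fun z => z + c) (𝓝[≠] z₀) (𝓝[≠] (z₀ + c)) :=
    tendsto_nhdsWithin_of_tendsto_nhds_of_eventually_within _
      (((continuous_add_const c).tendsto z₀).mono_left nhdsWithin_le_nhds)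
      (eventually_nhdsWithin_of_forall fun z hz => by simpa using hz)
  refine ⟨fun z => h (z + c), hh.comp_of_eq (by fun_prop) rfl, ?_⟩
  filter_upwards [hmap.eventually hfh] with z hz
  rw [hz, add_sub_add_right_eq_sub]

theorem comp_const_sub {c : ℂ} (hf : AtMostSimplePoleAt f (c - z₀)) :
    AtMostSimplePoleAt (fun z => f (c - z)) z₀ := by
  obtain ⟨h, hh, hfh⟩ := hf
  have hmap : Tendsto (fun z => c - z) (𝓝[≠] z₀) (𝓝[≠] (c - z₀)) :=
    tendsto_nhdsWithin_of_tendsto_nhds_of_eventually_within _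
      (((continuous_sub_left c).tendsto z₀).mono_left nhdsWithin_le_nhds)
      (eventually_nhdsWithin_of_forall fun z hz => by simpa using hz)
  refine ⟨fun z => -h (c - z), (hh.comp_of_eq (by fun_prop) rfl).neg, ?_⟩
  filter_upwards [hmap.eventually hfh] with z hz
  rw [hz, sub_sub_sub_cancel_left, neg_div, ← div_neg, neg_sub]

end AtMostSimplePoleAt

noncomputable def truncMellin (f : ℝ → ℂ) (z : ℂ) : ℂ :=
  ∫ u in Ioo (0 : ℝ) 1, (u : ℂ) ^ (z - 1) * f u

section

variable {f : ℝ → ℂ}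

theorem integrableOn_cpow_mul_Ioo (hf : ContinuousOn f (Icc 0 1)) {z : ℂ} (hz : 0 < z.re) :
    IntegrableOn (fun u : ℝ => (u : ℂ) ^ (z - 1) * f u) (Ioo 0 1) := by
  have hpow : IntegrableOn (fun u : ℝ => (u : ℂ) ^ (z - 1)) (Icc 0 1) := by
    rw [integrableOn_Icc_iff_integrableOn_Ioc,
      ← intervalIntegrable_iff_integrableOn_Ioc_of_le zero_le_one]
    exact intervalIntegral.intervalIntegrable_cpow' (by simpa using hz)
  exact (hpow.mul_continuousOn hf isCompact_Icc).mono_set Ioo_subset_Icc_self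

theorem truncMellin_eq_mellin (z : ℂ) :
    truncMellin f z = mellin ((Ioo 0 1).indicator f) z := by
  rw [truncMellin, mellin, ← integral_indicator measurableSet_Ioo,
    ← integral_indicator measurableSet_Ioi]
  congr 1 with u
  simp only [indicator]
  split_ifs <;> simp_all

theorem differentiableOn_truncMellin (hf : ContinuousOn f (Icc 0 1)) :
    DifferentiableOn ℂ (truncMellin f) {z | 0 < z.re} := by
  obtain ⟨C, hC⟩ := isCompact_Icc.exists_bound_of_continuousOn hf
  have hbound : ∀ u, ‖(Ioo 0 1).indicator f u‖ ≤ C := fun u => by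
    by_cases hu : u ∈ Ioo (0 : ℝ) 1
    · simpa [hu] using hC u (Ioo_subset_Icc_self hu)
    · simpa [hu] using (norm_nonneg _).trans (hC 0 (by simp))
  intro z hz
  rw [funext truncMellin_eq_mellin]
  refine (mellin_differentiableAt_of_isBigO_rpow (a := z.re + 1) (b := 0) ?_ ?_ (by linarith) ?_
    hz).differentiableWithinAt
  · exact ((hf.integrableOn_compact isCompact_Icc).mono_set Ioo_subset_Icc_self
      |>.integrable_indicator measurableSet_Ioo).locallyIntegrable.locallyIntegrableOn _
  · refine EventuallyEq.trans_isBigO ?_ (Asymptotics.isBigO_zero _ _)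
    filter_upwards [eventually_ge_atTop 1] with u hu
    exact indicator_of_notMem (fun h => h.2.not_ge hu) f
  · refine Asymptotics.IsBigO.of_bound C (Eventually.of_forall fun u => ?_)
    simpa using hbound u

theorem mul_truncMellin {f' : ℝ → ℂ} (hf : ∀ u ∈ Icc (0 : ℝ) 1, HasDerivAt f (f' u) u)
    (hf' : ContinuousOn f' (Icc 0 1)) {z : ℂ} (hz : 0 < z.re) :
    z * truncMellin f z = f 1 - truncMellin f' (z + 1) := by
  have hz₀ : z ≠ 0 := fun h => by simp [h] at hz
  have hcont : ContinuousOn f (Icc 0 1) := fun u hu => (hf u hu).continuousAt.continuousWithinAt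
  have hpow : ∀ u ∈ Ioo (0 : ℝ) 1,
      HasDerivAt (fun u : ℝ => (u : ℂ) ^ z) (z * (u : ℂ) ^ (z - 1)) u :=
    fun u hu => hasDerivAt_ofReal_cpow_const hu.1.ne' hz₀
  have hint₁ := (integrableOn_cpow_mul_Ioo hcont hz).const_mul z
  have hint₂ : IntegrableOn (fun u : ℝ => (u : ℂ) ^ z * f' u) (Ioo 0 1) := by
    simpa using integrableOn_cpow_mul_Ioo hf' (z := z + 1) (by simp; linarith)
  have hibp := intervalIntegral.integral_deriv_mul_eq_sub_of_hasDeriv_right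
    (a := 0) (b := 1) (u := fun u : ℝ => (u : ℂ) ^ z) (v := f)
    (Complex.continuous_ofReal_cpow_const hz).continuousOn
    (by rwa [uIcc_of_le zero_le_one])
    (by simpa using fun u hu => (hpow u hu).hasDerivWithinAt)
    (by simpa using fun u hu => (hf u (Ioo_subset_Icc_self hu)).hasDerivWithinAt)
    ((intervalIntegral.intervalIntegrable_cpow' (by simpa using hz)).const_mul z)
    (hf'.intervalIntegrable_of_Icc zero_le_one)
  rw [intervalIntegral.integral_of_le zero_le_one, integral_Ioc_eq_integral_Ioo,
    integral_add (by simpa [mul_assoc] using hint₁) hint₂] at hibp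
  simp only [Complex.ofReal_one, Complex.one_cpow, one_mul, Complex.ofReal_zero,
    Complex.zero_cpow hz₀, zero_mul, sub_zero] at hibp
  rw [truncMellin, truncMellin, add_sub_cancel_right, ← integral_const_mul, ← hibp]
  simp only [mul_assoc, add_sub_cancel_right]

end

-- `truncMellinCont f K k` continues `truncMellin (iteratedDeriv k f)` to `-K < Re z` by `K`
-- integrations by parts.
noncomputable def truncMellinCont (f : ℝ → ℂ) : ℕ → ℕ → ℂ → ℂ
  | 0, k, z => truncMellin (iteratedDeriv k f) z
  | K + 1, k, z => (iteratedDeriv k f 1 - truncMellinCont f K (k + 1) (z + 1)) / z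

noncomputable def truncMellinExt (f : ℝ → ℂ) (z : ℂ) : ℂ :=
  truncMellinCont f (⌈-z.re⌉₊ + 1) 0 z

section

variable {f : ℝ → ℂ} (hf : ContDiff ℝ ∞ f)
include hf

theorem ContDiff.hasDerivAt_iteratedDeriv (k : ℕ) (u : ℝ) :
    HasDerivAt (iteratedDeriv k f) (iteratedDeriv (k + 1) f u) u := by
  rw [iteratedDeriv_succ]
  exact (hf.differentiable_iteratedDeriv k
    (by exact_mod_cast WithTop.coe_lt_top _)).differentiableAt.hasDerivAt

theorem ContDiff.continuousOn_iteratedDeriv_Icc (k : ℕ) :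
    ContinuousOn (iteratedDeriv k f) (Icc 0 1) :=
  (hf.continuous_iteratedDeriv k (by exact_mod_cast le_top)).continuousOn

-- No pole has to be excluded: for `K > 0` both sides divide by the same `z`.
theorem truncMellinCont_succ {K : ℕ} {z : ℂ} (hz : -(K : ℝ) < z.re) (k : ℕ) :
    truncMellinCont f (K + 1) k z = truncMellinCont f K k z := by
  induction K generalizing k z with
  | zero =>
    have hz₀ : z ≠ 0 := fun h => by simp [h] at hz
    refine ((eq_div_iff hz₀).mpr ?_).symm
    rw [mul_comm]
    exact mul_truncMellin (fun u _ => hf.hasDerivAt_iteratedDeriv k u)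
      (hf.continuousOn_iteratedDeriv_Icc (k + 1)) (by simpa using hz)
  | succ K ih =>
    rw [truncMellinCont.eq_2 (K := K + 1), ih (z := z + 1) (by push_cast at hz; simp; linarith),
      truncMellinCont.eq_2 (K := K)]

theorem truncMellinCont_eq_of_le {K K' : ℕ} (hKK' : K ≤ K') {z : ℂ} (hz : -(K : ℝ) < z.re)
    (k : ℕ) : truncMellinCont f K' k z = truncMellinCont f K k z := by
  induction K', hKK' using Nat.le_induction with
  | base => rfl
  | succ K' hKK' ih =>
    have hle : (K : ℝ) ≤ K' := by exact_mod_cast hKK'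
    rw [truncMellinCont_succ hf (by linarith), ih]

theorem analyticAt_truncMellinCont {K : ℕ} {z : ℂ} (hz : -(K : ℝ) < z.re)
    (hpole : ∀ n : ℕ, z ≠ -n) (k : ℕ) : AnalyticAt ℂ (truncMellinCont f K k) z := by
  induction K generalizing k z with
  | zero =>
    have hopen : IsOpen {z : ℂ | 0 < z.re} := isOpen_lt continuous_const Complex.continuous_re
    exact (differentiableOn_truncMellin (hf.continuousOn_iteratedDeriv_Icc k)).analyticAt
      (hopen.mem_nhds (by simpa using hz))
  | succ K ih =>
    have hpole' : ∀ n : ℕ, z + 1 ≠ -n := fun n h =>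
      hpole (n + 1) (by push_cast; linear_combination h)
    have hshift : AnalyticAt ℂ (fun z => truncMellinCont f K (k + 1) (z + 1)) z :=
      (ih (by push_cast at hz; simp; linarith) hpole' (k + 1)).comp_of_eq (by fun_prop) rfl
    exact (analyticAt_const.sub hshift).div analyticAt_id (by simpa using hpole 0)

theorem atMostSimplePoleAt_truncMellinCont {K n : ℕ} (hn : n < K) (k : ℕ) :
    AtMostSimplePoleAt (truncMellinCont f K k) (-n) := by
  induction K generalizing k n with
  | zero => exact absurd hn n.not_lt_zero
  | succ K ih =>
    have hdef : truncMellinCont f (K + 1) k =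
        fun z => (iteratedDeriv k f 1 - truncMellinCont f K (k + 1) (z + 1)) / z :=
      funext fun z => truncMellinCont.eq_2 ..
    rw [hdef]
    cases n with
    | zero =>
      have hone : ∀ n : ℕ, (1 : ℂ) ≠ -n := fun n h => by
        have := congrArg Complex.re h
        simp at this
        linarith [n.cast_nonneg (α := ℝ)]
      have hnum : AnalyticAt ℂ
          (fun z => iteratedDeriv k f 1 - truncMellinCont f K (k + 1) (z + 1)) 0 :=
        analyticAt_const.sub ((analyticAt_truncMellinCont hf
          (by simp; linarith [K.cast_nonneg (α := ℝ)]) hone (k + 1)).comp_of_eq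
          (by fun_prop) (zero_add 1))
      rw [Nat.cast_zero, neg_zero]
      exact ⟨_, hnum, Eventually.of_forall fun z => by simp⟩
    | succ n =>
      have hshift := ih (Nat.lt_of_succ_lt_succ hn) (k + 1)
      rw [show -(n : ℂ) = -((n + 1 : ℕ) : ℂ) + 1 by push_cast; ring] at hshift
      exact (hshift.comp_add_const.const_sub _).div analyticAt_id
        (by push_cast; exact neg_ne_zero.mpr n.cast_add_one_ne_zero)

theorem truncMellinExt_eq_truncMellinCont {K : ℕ} {z : ℂ} (hz : -(K : ℝ) < z.re) :
    truncMellinExt f z = truncMellinCont f K 0 z := by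
  have hz' : -((⌈-z.re⌉₊ + 1 : ℕ) : ℝ) < z.re := by push_cast; linarith [Nat.le_ceil (-z.re)]
  rcases le_total K (⌈-z.re⌉₊ + 1) with h | h
  · exact truncMellinCont_eq_of_le hf h hz 0
  · exact (truncMellinCont_eq_of_le hf h hz' 0).symm

theorem truncMellinExt_eventuallyEq {K : ℕ} {z₀ : ℂ} (hz₀ : -(K : ℝ) < z₀.re) :
    truncMellinExt f =ᶠ[𝓝 z₀] truncMellinCont f K 0 :=
  eventually_of_mem ((isOpen_lt continuous_const Complex.continuous_re).mem_nhds hz₀)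
    fun _ hz => truncMellinExt_eq_truncMellinCont hf hz

theorem truncMellinExt_eq_truncMellin {z : ℂ} (hz : 0 < z.re) :
    truncMellinExt f z = truncMellin f z := by
  rw [truncMellinExt_eq_truncMellinCont hf (K := 0) (by simpa using hz), truncMellinCont,
    iteratedDeriv_zero]

theorem analyticAt_truncMellinExt {z : ℂ} (hz : ∀ n : ℕ, z ≠ -n) :
    AnalyticAt ℂ (truncMellinExt f) z := by
  obtain ⟨K, hK⟩ := exists_nat_gt (-z.re)
  exact (analyticAt_truncMellinCont hf (by linarith) hz 0).congr
    (truncMellinExt_eventuallyEq hf (by linarith)).symm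

theorem atMostSimplePoleAt_truncMellinExt (n : ℕ) :
    AtMostSimplePoleAt (truncMellinExt f) (-n) :=
  (atMostSimplePoleAt_truncMellinCont hf n.lt_succ_self 0).congr
    ((truncMellinExt_eventuallyEq hf (K := n + 1) (by simp)).symm.filter_mono
      nhdsWithin_le_nhds)

end

theorem image_inv_Ioo_zero_one : (fun u : ℝ => u⁻¹) '' Ioo 0 1 = Ioi 1 := by
  rw [image_inv_eq_inv, inv_Ioo_0_left one_pos, inv_one]

section

variable {E : Type*} [NormedAddCommGroup E] [NormedSpace ℝ E]

theorem abs_neg_inv_sq (u : ℝ) : |-(u ^ 2)⁻¹| = (u ^ 2)⁻¹ := by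
  rw [abs_neg, abs_of_nonneg (by positivity)]

theorem integrableOn_Ioi_one_iff_comp_inv (g : ℝ → E) :
    IntegrableOn g (Ioi 1) ↔ IntegrableOn (fun u : ℝ => (u ^ 2)⁻¹ • g u⁻¹) (Ioo 0 1) := by
  rw [← image_inv_Ioo_zero_one,
    integrableOn_image_iff_integrableOn_abs_deriv_smul measurableSet_Ioo
      (fun u hu => (hasDerivAt_inv hu.1.ne').hasDerivWithinAt) inv_injective.injOn]
  simp_rw [abs_neg_inv_sq]

theorem integral_Ioi_one_eq_integral_comp_inv (g : ℝ → E) :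
    ∫ y in Ioi 1, g y = ∫ u in Ioo 0 1, (u ^ 2)⁻¹ • g u⁻¹ := by
  rw [← image_inv_Ioo_zero_one,
    integral_image_eq_integral_abs_deriv_smul measurableSet_Ioo
      (fun u hu => (hasDerivAt_inv hu.1.ne').hasDerivWithinAt) inv_injective.injOn]
  simp_rw [abs_neg_inv_sq]

end

theorem inv_sq_smul_cpow_mul_I_mul_sub_zpow (m : ℕ) (α : ℝ) (s : ℂ) {u : ℝ} (hu : 0 < u) :
    (u ^ 2)⁻¹ • (((u⁻¹ : ℝ) : ℂ) ^ (s - 1) * (Complex.I * ((u⁻¹ : ℝ) : ℂ) - α) ^ (-(m : ℤ))) =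
      Complex.I ^ (-(m : ℤ)) *
        ((u : ℂ) ^ ((m : ℂ) - s - 1) * (1 + Complex.I * α * u) ^ (-(m : ℤ))) := by
  have hu₀ : (u : ℂ) ≠ 0 := Complex.ofReal_ne_zero.mpr hu.ne'
  have hbase : Complex.I * ((u⁻¹ : ℝ) : ℂ) - α =
      Complex.I * (u : ℂ)⁻¹ * (1 + Complex.I * α * u) := by
    push_cast
    field_simp
    ring_nf
    rw [Complex.I_sq]
    ring
  have hinv : ((u⁻¹ : ℝ) : ℂ) ^ (s - 1) = (u : ℂ) ^ (1 - s) := by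
    have harg : (u : ℂ).arg ≠ Real.pi := by
      simp [Complex.arg_ofReal_of_nonneg hu.le, Real.pi_ne_zero.symm]
    rw [Complex.ofReal_inv, Complex.inv_cpow _ _ harg, ← Complex.cpow_neg, neg_sub]
  have hexp : (u : ℂ) ^ ((m : ℂ) - s - 1) = (u : ℂ) ^ m * (u : ℂ) ^ (1 - s) / (u : ℂ) ^ 2 := by
    rw [show (m : ℂ) - s - 1 = m + (1 - s) - 2 by ring, Complex.cpow_sub _ _ hu₀,
      Complex.cpow_add _ _ hu₀, Complex.cpow_natCast, Complex.cpow_ofNat]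
  rw [Complex.real_smul, hbase, hinv, hexp, mul_zpow, mul_zpow, inv_zpow', neg_neg, zpow_natCast]
  push_cast
  field_simp

theorem one_add_I_mul_ofReal_ne_zero (α u : ℝ) : (1 : ℂ) + Complex.I * α * u ≠ 0 := fun h => by
  simpa using congrArg Complex.re h

theorem contDiff_one_add_I_mul_zpow (m : ℕ) (α : ℝ) :
    ContDiff ℝ ∞ fun u : ℝ => (1 + Complex.I * α * u : ℂ) ^ (-(m : ℤ)) := by
  simp_rw [zpow_neg, zpow_natCast]
  exact ((contDiff_const.add (contDiff_const.mul Complex.ofRealCLM.contDiff)).pow m).inv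
    fun u => pow_ne_zero m (one_add_I_mul_ofReal_ne_zero α u)

theorem integral_Ioi_one_eq_I_zpow_mul_truncMellin (m : ℕ) (α : ℝ) (s : ℂ) :
    ∫ y in Ioi (1 : ℝ), (y : ℂ) ^ (s - 1) * (Complex.I * y - α) ^ (-(m : ℤ)) =
      Complex.I ^ (-(m : ℤ)) *
        truncMellin (fun u => (1 + Complex.I * α * u) ^ (-(m : ℤ))) ((m : ℂ) - s) := by
  rw [integral_Ioi_one_eq_integral_comp_inv, truncMellin, ← integral_const_mul]
  exact setIntegral_congr_fun measurableSet_Ioo fun u hu =>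
    inv_sq_smul_cpow_mul_I_mul_sub_zpow m α s hu.1

theorem integrableOn_Ioi_one_cpow_mul_I_mul_sub_zpow (m : ℕ) (α : ℝ) {s : ℂ} (hs : s.re < m) :
    IntegrableOn (fun y : ℝ => (y : ℂ) ^ (s - 1) * (Complex.I * y - α) ^ (-(m : ℤ))) (Ioi 1) := by
  have hIoo := integrableOn_cpow_mul_Ioo (contDiff_one_add_I_mul_zpow m α).continuous.continuousOn
    (z := m - s) (by simpa using hs)
  rw [integrableOn_Ioi_one_iff_comp_inv]
  exact IntegrableOn.congr_fun (hIoo.const_mul _)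
    (fun u hu => (inv_sq_smul_cpow_mul_I_mul_sub_zpow m α s hu.1).symm) measurableSet_Ioo

theorem Estar_building_block_general (m : ℕ) (α : ℝ) :
    (∀ s : ℂ, s.re < m →
      IntegrableOn (fun y : ℝ => (y : ℂ) ^ (s - 1) *
        (Complex.I * (y : ℂ) - (α : ℂ)) ^ (-(m : ℤ))) (Set.Ioi 1) ∧
      IntegrableOn (fun u : ℝ => (u : ℂ) ^ ((m : ℂ) - s - 1) *
        (1 + Complex.I * (α : ℂ) * (u : ℂ)) ^ (-(m : ℤ))) (Set.Ioo 0 1) ∧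
      ∫ y in Set.Ioi (1 : ℝ), (y : ℂ) ^ (s - 1) *
          (Complex.I * (y : ℂ) - (α : ℂ)) ^ (-(m : ℤ)) =
        Complex.I ^ (-(m : ℤ)) * ∫ u in Set.Ioo (0 : ℝ) 1,
          (u : ℂ) ^ ((m : ℂ) - s - 1) *
            (1 + Complex.I * (α : ℂ) * (u : ℂ)) ^ (-(m : ℤ))) ∧
    ∃ g : ℂ → ℂ,
      (∀ s : ℂ, s.re < m → g s = ∫ y in Set.Ioi (1 : ℝ),
        (y : ℂ) ^ (s - 1) * (Complex.I * (y : ℂ) - (α : ℂ)) ^ (-(m : ℤ))) ∧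
      (∀ s : ℂ, (∀ n : ℕ, s ≠ (m : ℂ) + (n : ℂ)) → AnalyticAt ℂ g s) ∧
      (∀ n : ℕ, ∃ h : ℂ → ℂ, AnalyticAt ℂ h ((m : ℂ) + (n : ℂ)) ∧
        ∀ᶠ s in nhdsWithin ((m : ℂ) + (n : ℂ)) {((m : ℂ) + (n : ℂ))}ᶜ,
          g s = h s / (s - ((m : ℂ) + (n : ℂ)))) := by
  have hψ := contDiff_one_add_I_mul_zpow m α
  refine ⟨fun s hs => ⟨integrableOn_Ioi_one_cpow_mul_I_mul_sub_zpow m α hs,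
      integrableOn_cpow_mul_Ioo hψ.continuous.continuousOn (by simpa using hs),
      integral_Ioi_one_eq_I_zpow_mul_truncMellin m α s⟩,
    fun s => Complex.I ^ (-(m : ℤ)) *
      truncMellinExt (fun u => (1 + Complex.I * α * u) ^ (-(m : ℤ))) ((m : ℂ) - s),
    fun s hs => ?_, fun s hs => ?_, fun n => ?_⟩
  · rw [integral_Ioi_one_eq_I_zpow_mul_truncMellin]
    exact congrArg (Complex.I ^ (-(m : ℤ)) * ·)
      (truncMellinExt_eq_truncMellin hψ (by simpa using hs))
  · exact analyticAt_const.mul ((analyticAt_truncMellinExt hψ fun n h =>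
      hs n (by linear_combination -h)).comp_of_eq (by fun_prop) rfl)
  · have hpole := atMostSimplePoleAt_truncMellinExt hψ n
    rw [show -(n : ℂ) = m - (m + n) by ring] at hpole
    exact hpole.comp_const_sub.const_mul _

/-- Building block of `E*(s)`: for a positive integer `m` and `α ∈ ℝ`,
(i) for `Re s < m` both `∫₁^∞ y^{s−1}(iy−α)^{−m} dy` and
`∫₀^1 u^{m−s−1}(1+iαu)^{−m} du` converge absolutely and
`∫₁^∞ y^{s−1}(iy−α)^{−m} dy = i^{−m} ∫₀^1 u^{m−s−1}(1+iαu)^{−m} du`;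
(ii) `s ↦ ∫₁^∞ y^{s−1}(iy−α)^{−m} dy` extends to a meromorphic function on
`ℂ` with at worst simple poles contained in `{m, m+1, m+2, …}`. -/
theorem Estar_building_block (m : ℕ) (hm : 0 < m) (α : ℝ) :
    (∀ s : ℂ, s.re < m →
      IntegrableOn (fun y : ℝ => (y : ℂ) ^ (s - 1) *
        (Complex.I * (y : ℂ) - (α : ℂ)) ^ (-(m : ℤ))) (Set.Ioi 1) ∧
      IntegrableOn (fun u : ℝ => (u : ℂ) ^ ((m : ℂ) - s - 1) *
        (1 + Complex.I * (α : ℂ) * (u : ℂ)) ^ (-(m : ℤ))) (Set.Ioo 0 1) ∧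
      ∫ y in Set.Ioi (1 : ℝ), (y : ℂ) ^ (s - 1) *
          (Complex.I * (y : ℂ) - (α : ℂ)) ^ (-(m : ℤ)) =
        Complex.I ^ (-(m : ℤ)) * ∫ u in Set.Ioo (0 : ℝ) 1,
          (u : ℂ) ^ ((m : ℂ) - s - 1) *
            (1 + Complex.I * (α : ℂ) * (u : ℂ)) ^ (-(m : ℤ))) ∧
    ∃ g : ℂ → ℂ,
      (∀ s : ℂ, s.re < m → g s = ∫ y in Set.Ioi (1 : ℝ),
        (y : ℂ) ^ (s - 1) * (Complex.I * (y : ℂ) - (α : ℂ)) ^ (-(m : ℤ))) ∧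
      (∀ s : ℂ, (∀ n : ℕ, s ≠ (m : ℂ) + (n : ℂ)) → AnalyticAt ℂ g s) ∧
      (∀ n : ℕ, ∃ h : ℂ → ℂ, AnalyticAt ℂ h ((m : ℂ) + (n : ℂ)) ∧
        ∀ᶠ s in nhdsWithin ((m : ℂ) + (n : ℂ)) {((m : ℂ) + (n : ℂ))}ᶜ,
          g s = h s / (s - ((m : ℂ) + (n : ℂ)))) :=
  Estar_building_block_general m α
end
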